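/- arXiv:2305.05157 — 9 statements merged into one kernel-verified Lean document; each statement's English description precedes it below -/
import Mathlib

section
/- Let C be a linear [n,k] code over F_q satisfying the chain condition, with generalized Hamming weight hierarchy d_1 < d_2 < ... < d_k (and d_0 = 0), and let t ≥ 1 be an integer. Then the t-th generalized covering radius satisfies R_t(C) ≤ n − Σ_{r=1}^{k} ⌈(d_r − d_{r−1})/q^t⌉. Equivalently, for every collection of vectors v_1, ..., v_t ∈ F_q^n there exist codewords c_1, ..., c_t ∈ C and a set I ⊆ {1,...,n} with |I| ≤ n − Σ_{r=1}^{k} ⌈(d_r − d_{r−1})/q^t⌉ such that supp(v_i − c_i) ⊆ I for every i ∈ {1,...,t}. -/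
/-- The `t`-th generalized covering radius of a linear code `C ⊆ F^n`:
the minimal `r` such that any `t` vectors can be simultaneously covered by `t`
codewords on a common coordinate set `I` of size `r`. -/
noncomputable def genCovRad {F : Type*} [Field F] {n : ℕ} (C : Submodule F (Fin n → F))
    (t : ℕ) : ℕ :=
  sInf { r | ∀ v : Fin t → (Fin n → F), ∃ c : Fin t → (Fin n → F),
    (∀ i, c i ∈ C) ∧ ∃ I : Finset (Fin n), I.card = r ∧
      ∀ i j, (v i - c i) j ≠ 0 → j ∈ I }

/-- The `r`-th generalized Hamming weight of a linear code: the minimal support size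
of an `r`-dimensional subcode. -/
noncomputable def GHW (F : Type*) [Field F] {ι : Type*} (C : Submodule F (ι → F))
    (r : ℕ) : ℕ :=
  sInf { w | ∃ D : Submodule F (ι → F), D ≤ C ∧ Module.finrank F D = r ∧
    { i | ∃ x ∈ D, x i ≠ 0 }.ncard = w }

/-!
Write `S m = chainSupport c m` for the union of the supports of the chain codewords
`c 0, …, c (m-1)`, so that `|S (r+1) \ S r| = d (r+1) - d r` and `c r` vanishes off `S (r+1)`.
Working down the chain, `c r` is nonzero on the layer `S (r+1) \ S r`, so by pigeonhole on the
ratio vectors `(v i j / c r j)_i ∈ F^t` some `⌈|layer| / q^t⌉` of its coordinates share a common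
ratio `b`; subtracting `b i • c r` from every `v i` clears them all without touching the
coordinates already cleared outside `S (r+1)`. The coordinates never cleared form `I`.
-/

open Finset Submodule

theorem Finset.exists_ceilDiv_le_card_fiber {α β : Type*} [DecidableEq β] [Fintype β] [Nonempty β]
    (s : Finset α) (f : α → β) : ∃ b, #s ⌈/⌉ Fintype.card β ≤ #{x ∈ s | f x = b} := by
  obtain hN | hN := Nat.eq_zero_or_pos (#s ⌈/⌉ Fintype.card β)
  · exact ⟨Classical.arbitrary β, by simp [hN]⟩
  have hlt : #(univ : Finset β) * (#s ⌈/⌉ Fintype.card β - 1) < #s := by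
    rw [card_univ, ← not_le, ← ceilDiv_le_iff_le_mul Fintype.card_pos]
    omega
  obtain ⟨b, -, hb⟩ :=
    exists_lt_card_fiber_of_mul_lt_card_of_maps_to (fun a _ => mem_univ (f a)) hlt
  exact ⟨b, by omega⟩

theorem exists_eqOn_smul_of_forall_ne_zero {F ι τ : Type*} [Field F] [Fintype F] [Fintype τ]
    [DecidableEq τ] (T : Finset ι) {g : ι → F} (hg : ∀ j ∈ T, g j ≠ 0)
    (w : τ → ι → F) : ∃ b : τ → F, ∃ Z ⊆ T, #T ⌈/⌉ Fintype.card F ^ Fintype.card τ ≤ #Z ∧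
      ∀ i, ∀ j ∈ Z, w i j = b i * g j := by
  classical
  obtain ⟨b, hb⟩ := T.exists_ceilDiv_le_card_fiber fun j i => w i j / g j
  refine ⟨b, _, filter_subset _ T, by simpa using hb, fun i j hj => ?_⟩
  rw [mem_filter] at hj
  exact (div_eq_iff (hg j hj.1)).mp (congrFun hj.2 i)

section Chain

variable {F ι : Type*} [Field F] [Fintype ι] {k : ℕ} (c : Fin k → ι → F)

open Classical in
noncomputable def chainSupport (m : ℕ) : Finset ι := {i | ∃ j : Fin k, (j : ℕ) < m ∧ c j i ≠ 0}

variable {c}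

theorem mem_chainSupport {m : ℕ} {i : ι} :
    i ∈ chainSupport c m ↔ ∃ j : Fin k, (j : ℕ) < m ∧ c j i ≠ 0 := by
  simp [chainSupport]

variable (c)

@[simp]
theorem chainSupport_zero : chainSupport c 0 = ∅ := by
  ext i
  simp [mem_chainSupport]

theorem chainSupport_mono : Monotone (chainSupport c) := fun _ _ hm _ hi =>
  let ⟨j, hj, hji⟩ := mem_chainSupport.1 hi
  mem_chainSupport.2 ⟨j, hj.trans_le hm, hji⟩

theorem coe_chainSupport_succ (r : Fin k) :
    (chainSupport c (r + 1) : Set ι) = {i | ∃ j ≤ r, c j i ≠ 0} := by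
  ext i
  simp only [mem_coe, mem_chainSupport, Set.mem_ofPred_eq, Nat.lt_succ_iff, Fin.le_def]

variable {c}

theorem mem_chainSupport_succ_of_apply_ne_zero {s : ℕ} (hs : s < k) {i : ι}
    (hi : c ⟨s, hs⟩ i ≠ 0) :
    i ∈ chainSupport c (s + 1) :=
  mem_chainSupport.2 ⟨⟨s, hs⟩, s.lt_succ_self, hi⟩

theorem apply_ne_zero_of_mem_chainSupport_succ_sdiff [DecidableEq ι] {s : ℕ} (hs : s < k)
    {i : ι} (hi : i ∈ chainSupport c (s + 1) \ chainSupport c s) : c ⟨s, hs⟩ i ≠ 0 := by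
  obtain ⟨hi, hi'⟩ := mem_sdiff.1 hi
  obtain ⟨j, hj, hji⟩ := mem_chainSupport.1 hi
  have hjs : (j : ℕ) = s := by
    by_contra hne
    exact hi' (mem_chainSupport.2 ⟨j, by omega, hji⟩)
  exact (Fin.ext hjs : j = ⟨s, hs⟩) ▸ hji

variable [Fintype F] {τ : Type*} [Fintype τ] [DecidableEq τ] [DecidableEq ι]

theorem exists_span_eqOn_disjoint_chainSupport {s : ℕ} (hs : s ≤ k) (w : τ → ι → F) :
    ∃ u : τ → ι → F, (∀ i, u i ∈ span F (Set.range c)) ∧ ∃ Z : Finset ι,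
      Disjoint Z (chainSupport c s) ∧
      ∑ r ∈ Ico s k, #(chainSupport c (r + 1) \ chainSupport c r) ⌈/⌉
        Fintype.card F ^ Fintype.card τ ≤ #Z ∧
      ∀ i, ∀ j ∈ Z, w i j = u i j := by
  induction hs using Nat.decreasingInduction with
  | self => exact ⟨0, fun _ => zero_mem _, ∅, by simp⟩
  | of_succ s hs ih =>
    obtain ⟨u, hu, Z, hZS, hZcard, hZw⟩ := ih
    obtain ⟨b, Z₀, hZ₀S, hZ₀card, hZ₀w⟩ := exists_eqOn_smul_of_forall_ne_zero _
      (fun _ hj => apply_ne_zero_of_mem_chainSupport_succ_sdiff hs hj) (w - u)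
    have hZZ₀ : Disjoint Z Z₀ := hZS.mono_right (hZ₀S.trans sdiff_subset)
    refine ⟨fun i => u i + b i • c ⟨s, hs⟩,
      fun i => add_mem (hu i) (smul_mem _ _ (subset_span ⟨_, rfl⟩)), Z ∪ Z₀, ?_, ?_, ?_⟩
    · exact disjoint_union_left.2 ⟨hZS.mono_right (chainSupport_mono c s.le_succ),
        disjoint_of_subset_left hZ₀S disjoint_sdiff_self_left⟩
    · rw [sum_eq_sum_Ico_succ_bot hs, card_union_of_disjoint hZZ₀]
      omega
    · intro i j hj
      rcases mem_union.1 hj with hj | hj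
      · have hcj : c ⟨s, hs⟩ j = 0 := by
          by_contra hne
          exact disjoint_left.1 hZS hj (mem_chainSupport_succ_of_apply_ne_zero hs hne)
        simp [hZw i j hj, hcj]
      · have := hZ₀w i j hj
        simp only [Pi.sub_apply] at this
        simp only [Pi.add_apply, Pi.smul_apply, smul_eq_mul]
        linear_combination this

theorem exists_span_cover_chain (w : τ → ι → F) :
    ∃ u : τ → ι → F, (∀ i, u i ∈ span F (Set.range c)) ∧ ∃ I : Finset ι,
      #I = Fintype.card ι - ∑ r ∈ range k, #(chainSupport c (r + 1) \ chainSupport c r) ⌈/⌉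
        Fintype.card F ^ Fintype.card τ ∧
      ∀ i j, (w i - u i) j ≠ 0 → j ∈ I := by
  obtain ⟨u, hu, Z, -, hZcard, hZw⟩ :=
    exists_span_eqOn_disjoint_chainSupport (c := c) (Nat.zero_le k) w
  rw [← range_eq_Ico] at hZcard
  obtain ⟨I, hZI, hI⟩ := exists_superset_card_eq
    ((card_compl Z).trans_le (Nat.sub_le_sub_left hZcard _)) (Nat.sub_le _ _)
  refine ⟨u, hu, I, hI, fun i j hj => hZI (mem_compl.2 fun hjZ => hj ?_)⟩
  rw [Pi.sub_apply, hZw i j hjZ, sub_self]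

end Chain

theorem stmt0_general {F : Type*} [Field F] [Fintype F] {q n k t : ℕ}
    (hq : Fintype.card F = q)
    (C : Submodule F (Fin n → F))
    (d : ℕ → ℕ) (hd0 : d 0 = 0)
    (hchain : ∃ c : Fin k → (Fin n → F), LinearIndependent F c ∧ (∀ i, c i ∈ C) ∧
      ∀ r : Fin k, { i | ∃ j ≤ r, c j i ≠ 0 }.ncard = d (r.1 + 1)) :
    genCovRad C t ≤ n - ∑ r ∈ Finset.Icc 1 k, (d r - d (r - 1) + q ^ t - 1) / q ^ t ∧
    ∀ v : Fin t → (Fin n → F), ∃ c : Fin t → (Fin n → F),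
      (∀ i, c i ∈ C) ∧ ∃ I : Finset (Fin n),
        I.card ≤ n - ∑ r ∈ Finset.Icc 1 k, (d r - d (r - 1) + q ^ t - 1) / q ^ t ∧
        ∀ i j, (v i - c i) j ≠ 0 → j ∈ I := by
  classical
  subst hq
  obtain ⟨c, -, hcC, hsupp⟩ := hchain
  have hcard : ∀ m ≤ k, #(chainSupport c m) = d m
    | 0, _ => by rw [chainSupport_zero, card_empty, hd0]
    | r + 1, hr => by
      rw [← Set.ncard_coe_finset, coe_chainSupport_succ c ⟨r, hr⟩, hsupp ⟨r, hr⟩]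
  have hsum : ∑ r ∈ range k, #(chainSupport c (r + 1) \ chainSupport c r) ⌈/⌉
      Fintype.card F ^ Fintype.card (Fin t) =
      ∑ r ∈ Icc 1 k, (d r - d (r - 1) + Fintype.card F ^ t - 1) / Fintype.card F ^ t := by
    rw [← Ico_add_one_right_eq_Icc, sum_Ico_eq_sum_range, Nat.add_sub_cancel]
    refine sum_congr rfl fun r hr => ?_
    rw [mem_range] at hr
    rw [card_sdiff_of_subset (chainSupport_mono c r.le_succ), hcard _ hr, hcard _ hr.le,
      Fintype.card_fin, Nat.add_sub_cancel_left, add_comm 1 r]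
    exact Nat.ceilDiv_eq_add_pred_div _ _
  have hcover : ∀ v : Fin t → Fin n → F, ∃ u : Fin t → Fin n → F, (∀ i, u i ∈ C) ∧
      ∃ I : Finset (Fin n), #I = n - ∑ r ∈ Icc 1 k,
        (d r - d (r - 1) + Fintype.card F ^ t - 1) / Fintype.card F ^ t ∧
      ∀ i j, (v i - u i) j ≠ 0 → j ∈ I := fun v => by
    obtain ⟨u, hu, I, hI, hvu⟩ := exists_span_cover_chain (c := c) v
    refine ⟨u, fun i => span_le.2 (Set.range_subset_iff.2 hcC) (hu i), I, ?_, hvu⟩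
    rwa [Fintype.card_fin, hsum] at hI
  refine ⟨(Nat.sInf_le hcover : genCovRad C t ≤ _), fun v => ?_⟩
  obtain ⟨u, hu, I, hI, hvu⟩ := hcover v
  exact ⟨u, hu, I, hI.le, hvu⟩

/-- For a chained `[n,k]` code over `F_q` with GHW hierarchy `d 1 < ⋯ < d k` (and `d 0 = 0`),
the `t`-th generalized covering radius is at most
`n − Σ_{r=1}^{k} ⌈(d r − d (r−1))/q^t⌉`; equivalently, any `t` vectors are covered by `t`
codewords on a common coordinate set of at most that size. -/
theorem stmt0 {F : Type*} [Field F] [Fintype F] {q n k t : ℕ}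
    (hq : Fintype.card F = q) (ht : 1 ≤ t)
    (C : Submodule F (Fin n → F)) (hdim : Module.finrank F C = k)
    (d : ℕ → ℕ) (hd0 : d 0 = 0)
    (hGHW : ∀ r, 1 ≤ r → r ≤ k → d r = GHW F C r)
    (hmono : ∀ r, 1 ≤ r → r < k → d r < d (r + 1))
    (hchain : ∃ c : Fin k → (Fin n → F), LinearIndependent F c ∧ (∀ i, c i ∈ C) ∧
      ∀ r : Fin k, { i | ∃ j ≤ r, c j i ≠ 0 }.ncard = d (r.1 + 1)) :
    genCovRad C t ≤ n - ∑ r ∈ Finset.Icc 1 k, (d r - d (r - 1) + q ^ t - 1) / q ^ t ∧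
    ∀ v : Fin t → (Fin n → F), ∃ c : Fin t → (Fin n → F),
      (∀ i, c i ∈ C) ∧ ∃ I : Finset (Fin n),
        I.card ≤ n - ∑ r ∈ Finset.Icc 1 k, (d r - d (r - 1) + q ^ t - 1) / q ^ t ∧
        ∀ i j, (v i - c i) j ≠ 0 → j ∈ I :=
  stmt0_general hq C d hd0 hchain
end

section
/- Let C be a linear [n,k] code over F_q satisfying the chain condition, with generalized Hamming weight hierarchy d_1 < d_2 < ... < d_k (and d_0 = 0). Then the covering radius of C satisfies R(C) ≤ n − Σ_{r=1}^{k} ⌈(d_r − d_{r−1})/q⌉; that is, for every v ∈ F_q^n there exists a codeword c ∈ C with Hamming distance d_H(v, c) ≤ n − Σ_{r=1}^{k} ⌈(d_r − d_{r−1})/q⌉. -/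
/-- The covering radius of a linear code `C ⊆ F^ι`: the minimal `r` such that every
vector is within Hamming distance `r` of some codeword. -/
noncomputable def covRad (F : Type*) [Field F] [DecidableEq F] {ι : Type*} [Fintype ι]
    (C : Submodule F (ι → F)) : ℕ :=
  sInf { r | ∀ v : ι → F, ∃ c ∈ C, hammingDist v c ≤ r }

/-!
Let `c₁, …, c_k` be the chain codewords and `T_r = supp c₁ ∪ ⋯ ∪ supp c_r`, so that
`|T_r \ T_{r-1}| = d_r - d_{r-1}`, `c_r` is nonzero on `T_r \ T_{r-1}` and `c₁, …, c_{r-1}`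
vanish there. Choose the coefficients of `w = ∑ a_r c_r` from `r = k` downwards: once
`a_{r+1}, …, a_k` are fixed, the coordinates of `w` on `T_r \ T_{r-1}` are those of the fixed
part plus `a_r c_r`, so by pigeonhole over the `q` values of `a_r` one of them makes `w` agree
with `v` in at least `⌈(d_r - d_{r-1}) / q⌉` of these coordinates.
-/

open Finset

theorem Finset.exists_ceilDiv_card_le_card_fiber {α β : Type*} [Fintype β] [Nonempty β]
    [DecidableEq β] (s : Finset α) (f : α → β) :
    ∃ y, #s ⌈/⌉ Fintype.card β ≤ #{x ∈ s | f x = y} := by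
  obtain hs | hs := Nat.eq_zero_or_pos (#s ⌈/⌉ Fintype.card β)
  · exact ⟨Classical.arbitrary β, by simp [hs]⟩
  have hlt : #(univ : Finset β) * (#s ⌈/⌉ Fintype.card β - 1) < #s := by
    by_contra! h
    have := (ceilDiv_le_iff_le_mul Fintype.card_pos).2 h
    omega
  obtain ⟨y, -, hy⟩ := exists_lt_card_fiber_of_mul_lt_card_of_maps_to (f := f) (by simp) hlt
  exact ⟨y, by omega⟩

theorem hammingDist_le_card_sub_card_filter_eq {ι β : Type*} [Fintype ι] [DecidableEq β]
    (s : Finset ι) (x y : ι → β) :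
    hammingDist x y ≤ Fintype.card ι - #{i ∈ s | x i = y i} := by
  have hsplit := card_filter_add_card_filter_not (s := (univ : Finset ι)) (fun i => x i = y i)
  have hsub : #{i ∈ s | x i = y i} ≤ #{i | x i = y i} :=
    card_le_card (filter_subset_filter _ (subset_univ s))
  rw [card_univ] at hsplit
  simp only [hammingDist, ne_eq]
  omega

section Greedy

variable {ι F : Type*} [Fintype ι] [Field F] [DecidableEq F]

def prefixSupport (c : ℕ → ι → F) (m : ℕ) : Finset ι := {i | ∃ j < m, c j i ≠ 0}

variable {c : ℕ → ι → F}

@[simp]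
theorem prefixSupport_zero : prefixSupport c 0 = ∅ := by
  simp [prefixSupport]

theorem prefixSupport_mono : Monotone (prefixSupport c) := by
  intro a b hab i
  simp only [prefixSupport, mem_filter, mem_univ, true_and]
  exact fun ⟨j, hj, hji⟩ => ⟨j, hj.trans_le hab, hji⟩

theorem apply_ne_zero_of_mem_prefixSupport_succ_sdiff [DecidableEq ι] {m : ℕ} {i : ι}
    (hi : i ∈ prefixSupport c (m + 1) \ prefixSupport c m) : c m i ≠ 0 := by
  simp only [prefixSupport, mem_sdiff, mem_filter, mem_univ, true_and, not_exists,
    not_and, not_not] at hi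
  obtain ⟨⟨j, hj, hji⟩, hlow⟩ := hi
  obtain hj | rfl := Nat.lt_succ_iff_lt_or_eq.1 hj
  · exact absurd (hlow j hj) hji
  · exact hji

theorem sum_smul_apply_eq_zero_of_notMem_prefixSupport {m : ℕ} {i : ι}
    (hi : i ∉ prefixSupport c m) (a : ℕ → F) :
    (∑ j ∈ range m, a j • c j) i = 0 := by
  simp only [prefixSupport, mem_filter, mem_univ, true_and, not_exists, not_and,
    not_not] at hi
  rw [Finset.sum_apply]
  exact sum_eq_zero fun j hj => by simp [hi j (mem_range.1 hj)]

theorem exists_sum_smul_card_agree_ge [Fintype F] [DecidableEq ι] (c : ℕ → ι → F) (m : ℕ)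
    (v : ι → F) :
    ∃ a : ℕ → F,
      ∑ j ∈ range m, #(prefixSupport c (j + 1) \ prefixSupport c j) ⌈/⌉ Fintype.card F ≤
        #{i ∈ prefixSupport c m | (∑ j ∈ range m, a j • c j) i = v i} := by
  induction m generalizing v with
  | zero => exact ⟨0, by simp⟩
  | succ m ih =>
    set S := prefixSupport c (m + 1) \ prefixSupport c m
    obtain ⟨b, hb⟩ := exists_ceilDiv_card_le_card_fiber S fun i => v i / c m i
    obtain ⟨a, ha⟩ := ih (v - b • c m)
    refine ⟨Function.update a m b, ?_⟩
    have hsum : ∑ j ∈ range (m + 1), Function.update a m b j • c j =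
        ∑ j ∈ range m, a j • c j + b • c m := by
      rw [sum_range_succ, Function.update_self]
      congr 1
      exact sum_congr rfl fun j hj => by rw [Function.update_of_ne (mem_range.1 hj).ne]
    set w := ∑ j ∈ range m, a j • c j with hw_def
    have hsub : {i ∈ prefixSupport c m | w i = (v - b • c m) i} ∪ {i ∈ S | v i / c m i = b} ⊆
        {i ∈ prefixSupport c (m + 1) | (w + b • c m) i = v i} := by
      intro i hi
      simp only [mem_union, mem_filter] at hi ⊢
      rcases hi with ⟨hiT, hw⟩ | ⟨hiS, hv⟩
      · refine ⟨prefixSupport_mono m.le_succ hiT, ?_⟩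
        simp [hw]
      · refine ⟨(mem_sdiff.1 hiS).1, ?_⟩
        have hc := apply_ne_zero_of_mem_prefixSupport_succ_sdiff hiS
        rw [Pi.add_apply, hw_def,
          sum_smul_apply_eq_zero_of_notMem_prefixSupport (mem_sdiff.1 hiS).2, ← hv]
        simp [div_mul_cancel₀ _ hc]
    have hdisj : Disjoint {i ∈ prefixSupport c m | w i = (v - b • c m) i}
        {i ∈ S | v i / c m i = b} :=
      disjoint_filter_filter disjoint_sdiff
    rw [sum_range_succ, hsum]
    calc _ ≤ _ + _ := add_le_add ha hb
      _ = _ := (card_union_of_disjoint hdisj).symm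
      _ ≤ _ := card_le_card hsub

end Greedy

theorem card_prefixSupport_extend {ι F : Type*} [Fintype ι] [Field F] [DecidableEq F] {k : ℕ}
    (c : Fin k → ι → F) (d : ℕ → ℕ) (hd0 : d 0 = 0)
    (hsupp : ∀ r : Fin k, {i | ∃ j ≤ r, c j i ≠ 0}.ncard = d (r.1 + 1)) {m : ℕ}
    (hm : m ≤ k) :
    #(prefixSupport (fun j => if h : j < k then c ⟨j, h⟩ else 0) m) = d m := by
  cases m with
  | zero => simp [hd0]
  | succ r =>
    rw [← hsupp ⟨r, hm⟩, ← Set.ncard_coe_finset]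
    congr 1
    ext i
    simp only [prefixSupport, coe_filter, mem_univ, true_and, Set.mem_ofPred_eq]
    constructor
    · rintro ⟨j, hj, hji⟩
      have hjk : j < k := by omega
      rw [dif_pos hjk] at hji
      exact ⟨⟨j, hjk⟩, Fin.mk_le_mk.2 (by omega), hji⟩
    · rintro ⟨⟨j, hjk⟩, hj, hji⟩
      exact ⟨j, by simpa [Nat.lt_succ_iff] using hj, by rwa [dif_pos hjk]⟩

theorem stmt1_general {F : Type*} [Field F] [Fintype F] [DecidableEq F] {q n k : ℕ}
    (hq : Fintype.card F = q)
    (C : Submodule F (Fin n → F))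
    (d : ℕ → ℕ) (hd0 : d 0 = 0)
    (hchain : ∃ c : Fin k → (Fin n → F), LinearIndependent F c ∧ (∀ i, c i ∈ C) ∧
      ∀ r : Fin k, { i | ∃ j ≤ r, c j i ≠ 0 }.ncard = d (r.1 + 1)) :
    covRad F C ≤ n - ∑ r ∈ Finset.Icc 1 k, (d r - d (r - 1) + q - 1) / q ∧
    ∀ v : Fin n → F, ∃ c ∈ C,
      hammingDist v c ≤ n - ∑ r ∈ Finset.Icc 1 k, (d r - d (r - 1) + q - 1) / q := by
  obtain ⟨c, -, hcC, hsupp⟩ := hchain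
  set c' : ℕ → Fin n → F := fun j => if h : j < k then c ⟨j, h⟩ else 0
  have hc'C : ∀ j, c' j ∈ C := fun j => by
    by_cases h : j < k <;> simp [c', h, hcC, C.zero_mem]
  have hsum : ∑ r ∈ Icc 1 k, (d r - d (r - 1) + q - 1) / q =
      ∑ j ∈ range k, #(prefixSupport c' (j + 1) \ prefixSupport c' j) ⌈/⌉ Fintype.card F := by
    rw [← Ico_add_one_right_eq_Icc, sum_Ico_eq_sum_range, Nat.add_sub_cancel]
    refine sum_congr rfl fun j hj => ?_
    rw [add_comm 1 j, Nat.add_sub_cancel, card_sdiff_of_subset (prefixSupport_mono j.le_succ),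
      card_prefixSupport_extend c d hd0 hsupp (mem_range.1 hj),
      card_prefixSupport_extend c d hd0 hsupp (mem_range.1 hj).le, hq,
      Nat.ceilDiv_eq_add_pred_div]
  have hcover : ∀ v : Fin n → F, ∃ w ∈ C,
      hammingDist v w ≤ n - ∑ r ∈ Icc 1 k, (d r - d (r - 1) + q - 1) / q := by
    intro v
    obtain ⟨a, ha⟩ := exists_sum_smul_card_agree_ge c' k v
    refine ⟨∑ j ∈ range k, a j • c' j, C.sum_mem fun j _ => C.smul_mem _ (hc'C j), ?_⟩
    calc hammingDist v (∑ j ∈ range k, a j • c' j)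
        ≤ n - #{i ∈ prefixSupport c' k | v i = (∑ j ∈ range k, a j • c' j) i} := by
          simpa only [Fintype.card_fin] using hammingDist_le_card_sub_card_filter_eq
            (prefixSupport c' k) v (∑ j ∈ range k, a j • c' j)
      _ ≤ _ := by
        simp_rw [hsum, eq_comm (a := v _)]
        exact Nat.sub_le_sub_left ha n
  exact ⟨Nat.sInf_le hcover, hcover⟩

/-- For a chained `[n,k]` code over `F_q` with GHW hierarchy `d 1 < ⋯ < d k` (and `d 0 = 0`),
the covering radius is at most `n − Σ_{r=1}^{k} ⌈(d r − d (r−1))/q⌉`; that is, every vector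
of `F_q^n` is within that Hamming distance of a codeword. -/
theorem stmt1 {F : Type*} [Field F] [Fintype F] [DecidableEq F] {q n k : ℕ}
    (hq : Fintype.card F = q)
    (C : Submodule F (Fin n → F)) (hdim : Module.finrank F C = k)
    (d : ℕ → ℕ) (hd0 : d 0 = 0)
    (hGHW : ∀ r, 1 ≤ r → r ≤ k → d r = GHW F C r)
    (hmono : ∀ r, 1 ≤ r → r < k → d r < d (r + 1))
    (hchain : ∃ c : Fin k → (Fin n → F), LinearIndependent F c ∧ (∀ i, c i ∈ C) ∧
      ∀ r : Fin k, { i | ∃ j ≤ r, c j i ≠ 0 }.ncard = d (r.1 + 1)) :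
    covRad F C ≤ n - ∑ r ∈ Finset.Icc 1 k, (d r - d (r - 1) + q - 1) / q ∧
    ∀ v : Fin n → F, ∃ c ∈ C,
      hammingDist v c ≤ n - ∑ r ∈ Finset.Icc 1 k, (d r - d (r - 1) + q - 1) / q :=
  stmt1_general hq C d hd0 hchain
end

section
/- Let C be a linear [n,k] code over F_q with generator matrix G (a k×n matrix over F_q whose rows span C), and for an integer t ≥ 1 let C_t = {xG : x ∈ F_{q^t}^k} be the linear [n,k] code over the extension field F_{q^t} generated by the same matrix G. Then for every r ∈ {1,...,k}, the r-th generalized Hamming weight of C equals the r-th generalized Hamming weight of C_t, i.e., d_r(C) = d_r(C_t). -/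
/-! The `r`-th weight is the least `|S|` such that the subcode supported in `S` has dimension
at least `r`. By rank–nullity that dimension is `dim C - dim (C restricted to Sᶜ)`, and the
dimension of a span of vectors over `F` does not change when the same vectors are spanned over
`E`, because an `F`-linearly independent family in `F^n` stays independent in `E^n`. So `C` and
its extension `C_t = span_E C` have the same dimension profile, hence the same weights. -/

open Module Set Submodule

theorem Nat.sInf_eq_sInf_of_forall_exists_le {A B : Set ℕ}
    (hAB : ∀ a ∈ A, ∃ b ∈ B, b ≤ a) (hBA : ∀ b ∈ B, ∃ a ∈ A, a ≤ b) :
    sInf A = sInf B := by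
  have sInf_le_sInf : ∀ {A B : Set ℕ}, (∀ b ∈ B, ∃ a ∈ A, a ≤ b) → B.Nonempty →
      sInf A ≤ sInf B := by
    intro A B hBA hB
    obtain ⟨a, ha, hab⟩ := hBA _ (Nat.sInf_mem hB)
    exact (Nat.sInf_le ha).trans hab
  rcases B.eq_empty_or_nonempty with rfl | hB
  · have : A = ∅ := eq_empty_of_forall_notMem fun a ha => by simpa using hAB a ha
    rw [this]
  · obtain ⟨b, hb⟩ := hB
    obtain ⟨a, ha, -⟩ := hBA b hb
    exact le_antisymm (sInf_le_sInf hBA ⟨b, hb⟩) (sInf_le_sInf hAB ⟨a, ha⟩)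

theorem Submodule.exists_le_finrank_eq {K V : Type*} [Field K] [AddCommGroup V] [Module K V]
    (W : Submodule K V) {r : ℕ} (hr : r ≤ finrank K W) :
    ∃ D : Submodule K V, D ≤ W ∧ finrank K D = r := by
  obtain ⟨f, hf⟩ := exists_linearIndependent_of_le_finrank hr
  refine ⟨span K (range (W.subtype ∘ f)), span_le.2 ?_, ?_⟩
  · rintro _ ⟨i, rfl⟩
    exact (f i).2
  · rw [finrank_span_eq_card (hf.map' W.subtype W.ker_subtype), Fintype.card_fin]

theorem Submodule.finrank_inf_ker_add_finrank_map {K V V₂ : Type*} [Field K]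
    [AddCommGroup V] [Module K V] [AddCommGroup V₂] [Module K V₂]
    (C : Submodule K V) [FiniteDimensional K C] (f : V →ₗ[K] V₂) :
    finrank K ↥(C ⊓ LinearMap.ker f) + finrank K ↥(C.map f) = finrank K C := by
  rw [← LinearMap.finrank_range_add_finrank_ker (f.domRestrict C), LinearMap.range_domRestrict,
    LinearMap.ker_domRestrict, ← finrank_map_subtype_eq, map_comap_subtype, add_comm]

section SupportedSubcodes

variable (K : Type*) [Field K] {ι : Type*}

def restrictCompl (S : Set ι) : (ι → K) →ₗ[K] (↥Sᶜ → K) :=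
  LinearMap.funLeft K K (↑)

variable {K}

theorem mem_ker_restrictCompl {S : Set ι} {x : ι → K} :
    x ∈ LinearMap.ker (restrictCompl K S) ↔ ∀ i ∉ S, x i = 0 := by
  simp [restrictCompl, LinearMap.funLeft, funext_iff]

theorem GHW_eq_sInf_ncard [Finite ι] (C : Submodule K (ι → K)) (r : ℕ) :
    GHW K C r = sInf { w | ∃ S : Set ι, S.ncard = w ∧
      r ≤ finrank K ↥(C ⊓ LinearMap.ker (restrictCompl K S)) } := by
  apply Nat.sInf_eq_sInf_of_forall_exists_le
  · rintro _ ⟨D, hDC, rfl, rfl⟩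
    have hD : D ≤ C ⊓ LinearMap.ker (restrictCompl K { i | ∃ x ∈ D, x i ≠ 0 }) := by
      refine le_inf hDC fun x hx => mem_ker_restrictCompl.2 fun i hi => ?_
      by_contra hxi
      exact hi ⟨x, hx, hxi⟩
    exact ⟨_, ⟨_, rfl, Submodule.finrank_mono hD⟩, le_rfl⟩
  · rintro _ ⟨S, rfl, hS⟩
    obtain ⟨D, hD, rfl⟩ := (C ⊓ LinearMap.ker (restrictCompl K S)).exists_le_finrank_eq hS
    refine ⟨_, ⟨D, hD.trans inf_le_left, rfl, rfl⟩, ncard_le_ncard ?_ (toFinite S)⟩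
    rintro i ⟨x, hx, hxi⟩
    by_contra hiS
    exact hxi (mem_ker_restrictCompl.1 (hD hx).2 i hiS)

end SupportedSubcodes

section ScalarExtension

variable (F E : Type*) [Field F] [Field E] [Algebra F E] {ι : Type*}

theorem span_image_piAlgebraMap_span (s : Set (ι → F)) :
    span E (Pi.algebraMap ι F E '' span F s) = span E (Pi.algebraMap ι F E '' s) := by
  rw [← map_coe, map_span, span_span_of_tower]

theorem finrank_span_image_piAlgebraMap [Finite ι] (s : Set (ι → F)) :
    finrank E (span E (Pi.algebraMap ι F E '' s)) = finrank F (span F s) := by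
  obtain ⟨b, -, hb, hli⟩ := exists_linearIndependent F s
  have := hli.finite
  have : Fintype b := .ofFinite b
  have hliE : LinearIndependent E fun x : b => Pi.algebraMap ι F E x :=
    linearIndependent_algebraMap_comp_iff.2 hli
  rw [← span_image_piAlgebraMap_span, ← hb, span_image_piAlgebraMap_span, image_eq_range,
    finrank_span_eq_card hliE, ← finrank_span_eq_card hli, Subtype.range_coe]

theorem finrank_span_image_piAlgebraMap_inf_ker_restrictCompl [Finite ι]
    (C : Submodule F (ι → F)) (S : Set ι) :
    finrank E ↥(span E (Pi.algebraMap ι F E '' C) ⊓ LinearMap.ker (restrictCompl E S)) =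
      finrank F ↥(C ⊓ LinearMap.ker (restrictCompl F S)) := by
  have hmap : (span E (Pi.algebraMap ι F E '' C)).map (restrictCompl E S) =
      span E (Pi.algebraMap (↥Sᶜ) F E '' C.map (restrictCompl F S)) := by
    rw [map_span, image_image, map_coe, image_image]
    rfl
  have hE := (span E (Pi.algebraMap ι F E '' C)).finrank_inf_ker_add_finrank_map
    (restrictCompl E S)
  have hF := C.finrank_inf_ker_add_finrank_map (restrictCompl F S)
  rw [hmap, finrank_span_image_piAlgebraMap, span_eq, finrank_span_image_piAlgebraMap,
    span_eq] at hE
  omega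

theorem GHW_span_image_piAlgebraMap [Finite ι] (C : Submodule F (ι → F)) (r : ℕ) :
    GHW E (span E (Pi.algebraMap ι F E '' C)) r = GHW F C r := by
  simp only [GHW_eq_sInf_ncard, finrank_span_image_piAlgebraMap_inf_ker_restrictCompl]

end ScalarExtension

theorem stmt2_general {F E : Type*} [Field F] [Field E] [Algebra F E]
    {n k : ℕ}
    (G : Matrix (Fin k) (Fin n) F)
    (C : Submodule F (Fin n → F)) (hC : C = Submodule.span F (Set.range G))
    (Ct : Submodule E (Fin n → E))
    (hCt : Ct = LinearMap.range (Matrix.vecMulLinear (G.map (algebraMap F E)))) :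
    ∀ r, 1 ≤ r → r ≤ k → GHW F C r = GHW E Ct r := by
  intro r _ _
  have hCt_span : Ct = span E (Pi.algebraMap (Fin n) F E '' C) := by
    rw [hCt, range_vecMulLinear, hC, span_image_piAlgebraMap_span]
    congr 1
    exact range_comp (Pi.algebraMap (Fin n) F E) G
  rw [hCt_span, GHW_span_image_piAlgebraMap]

/-- If `C` is an `[n,k]` code over `F_q` with generator matrix `G`, and `C_t` is the
`[n,k]` code over `F_{q^t}` generated by the same matrix `G` (i.e. `{xG : x ∈ F_{q^t}^k}`),
then the generalized Hamming weights of `C` and `C_t` coincide. -/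
theorem stmt2 {F E : Type*} [Field F] [Fintype F] [Field E] [Fintype E] [Algebra F E]
    {q t n k : ℕ} (hq : Fintype.card F = q) (hE : Fintype.card E = q ^ t) (ht : 1 ≤ t)
    (G : Matrix (Fin k) (Fin n) F)
    (C : Submodule F (Fin n → F)) (hC : C = Submodule.span F (Set.range G))
    (hdim : Module.finrank F C = k)
    (Ct : Submodule E (Fin n → E))
    (hCt : Ct = LinearMap.range (Matrix.vecMulLinear (G.map (algebraMap F E)))) :
    ∀ r, 1 ≤ r → r ≤ k → GHW F C r = GHW E Ct r :=
  stmt2_general G C hC Ct hCt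
end

section
/- Let C be a linear [n,k] code over F_q with k < n. Then the generalized covering radii of C are monotone non-decreasing, R_1(C) ≤ R_2(C) ≤ ... ≤ R_{n−k}(C), and moreover R_{n−k}(C) = n − k. -/
/-!
A set of coordinates `I` works for `v₁, …, v_t` exactly when every `vᵢ` lies in
`C ⊔ span {e_j | j ∈ I}`. Padding with zero vectors shows that a radius good for `t₂` vectors is
good for any `t₁ ≤ t₂`, whence monotonicity. Since the images of the `e_j` span `F^n ⧸ C`, some
`n - k` of them form a basis of it; these coordinates `J` satisfy `C ⊔ span {e_j | j ∈ J} = ⊤`,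
so `R_t ≤ n - k` for every `t`. Conversely, covering the `n - k` vectors `e_j`, `j ∈ J`, with a
set `I` forces `C ⊔ span {e_j | j ∈ I} = ⊤`, hence `n ≤ k + |I|`.
-/

open Module Submodule
section CoordSpan

variable (F : Type*) {ι : Type*} [Field F] [Fintype ι]

def coordSpan (I : Finset ι) : Submodule F (ι → F) :=
  span F (Pi.basisFun F ι '' I)

variable {F}

theorem mem_coordSpan {I : Finset ι} {x : ι → F} : x ∈ coordSpan F I ↔ ∀ j, x j ≠ 0 → j ∈ I := by
  simp [coordSpan, Basis.mem_span_image, Set.subset_def]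

theorem finrank_coordSpan_le (I : Finset ι) : finrank F (coordSpan F I) ≤ I.card := by
  classical
  rw [coordSpan, ← Finset.coe_image]
  exact (finrank_span_finset_le_card _).trans Finset.card_image_le

theorem coordSpan_univ : coordSpan F (Finset.univ : Finset ι) = ⊤ := by
  simp [coordSpan, Basis.span_eq]

theorem mem_sup_coordSpan {C : Submodule F (ι → F)} {I : Finset ι} {v : ι → F} :
    v ∈ C ⊔ coordSpan F I ↔ ∃ c ∈ C, ∀ j, (v - c) j ≠ 0 → j ∈ I := by
  simp only [mem_sup, ← mem_coordSpan]
  constructor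
  · rintro ⟨c, hc, w, hw, rfl⟩
    exact ⟨c, hc, by simpa using hw⟩
  · rintro ⟨c, hc, hw⟩
    exact ⟨c, hc, v - c, hw, add_sub_cancel c v⟩

theorem exists_sup_coordSpan_eq_top (C : Submodule F (ι → F)) :
    ∃ I : Finset ι, I.card + finrank F C = Fintype.card ι ∧ C ⊔ coordSpan F I = ⊤ := by
  obtain ⟨κ, a, ha, hspan, hli⟩ := exists_linearIndependent' F (C.mkQ ∘ Pi.basisFun F ι)
  have hspan_top : span F (Set.range (C.mkQ ∘ Pi.basisFun F ι)) = ⊤ := by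
    rw [Set.range_comp, ← map_span, Basis.span_eq, Submodule.map_top, range_mkQ]
  have := hli.finite
  cases nonempty_fintype κ
  refine ⟨Finset.univ.map ⟨a, ha⟩, ?_, ?_⟩
  · have hκ : Fintype.card κ = finrank F ((ι → F) ⧸ C) := by
      rw [← finrank_span_eq_card hli, hspan, hspan_top, finrank_top]
    rw [Finset.card_map, Finset.card_univ, hκ, finrank_quotient_add_finrank,
      finrank_fintype_fun_eq_card]
  · rw [← map_mkQ_eq_top, coordSpan, map_span, Finset.coe_map, Finset.coe_univ, Set.image_univ,
      Set.image_image, ← Set.range_comp]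
    exact hspan.trans hspan_top

theorem card_le_finrank_add_card {C : Submodule F (ι → F)} {I : Finset ι}
    (h : C ⊔ coordSpan F I = ⊤) : Fintype.card ι ≤ finrank F C + I.card := by
  calc Fintype.card ι = finrank F (C ⊔ coordSpan F I : Submodule F (ι → F)) := by
        rw [h, finrank_top, finrank_fintype_fun_eq_card]
    _ ≤ finrank F C + finrank F (coordSpan F I) := finrank_add_le_finrank_add_finrank _ _
    _ ≤ finrank F C + I.card := by grw [finrank_coordSpan_le]

end CoordSpan

section GenCovRad

variable {F : Type*} [Field F] {n : ℕ} (C : Submodule F (Fin n → F))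

def IsGenCovering (t r : ℕ) : Prop :=
  ∀ v : Fin t → (Fin n → F), ∃ c : Fin t → (Fin n → F),
    (∀ i, c i ∈ C) ∧ ∃ I : Finset (Fin n), I.card = r ∧ ∀ i j, (v i - c i) j ≠ 0 → j ∈ I

variable {C}

theorem isGenCovering_card_of_sup_eq_top {I : Finset (Fin n)} (h : C ⊔ coordSpan F I = ⊤)
    (t : ℕ) : IsGenCovering C t I.card := by
  intro v
  have hv (i : Fin t) := mem_sup_coordSpan.1 (h ▸ mem_top : v i ∈ C ⊔ coordSpan F I)
  choose c hc hsupp using hv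
  exact ⟨c, hc, I, rfl, hsupp⟩

theorem IsGenCovering.of_le {t₁ t₂ r : ℕ} (h : t₁ ≤ t₂) (hr : IsGenCovering C t₂ r) :
    IsGenCovering C t₁ r := by
  intro v
  obtain ⟨c, hc, I, hI, hsupp⟩ := hr fun i => if hi : (i : ℕ) < t₁ then v ⟨i, hi⟩ else 0
  refine ⟨c ∘ Fin.castLE h, fun i => hc _, I, hI, fun i j hj => hsupp (Fin.castLE h i) j ?_⟩
  simpa using hj

theorem IsGenCovering.card_le_finrank_add {J : Finset (Fin n)} {r : ℕ}
    (hr : IsGenCovering C J.card r) (hJ : C ⊔ coordSpan F J = ⊤) : n ≤ finrank F C + r := by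
  obtain ⟨c, hc, I, rfl, hsupp⟩ := hr fun i => Pi.basisFun F _ (J.equivFin.symm i)
  have hJI : coordSpan F J ≤ C ⊔ coordSpan F I := by
    refine span_le.2 ?_
    rintro _ ⟨j, hj, rfl⟩
    simpa using mem_sup_coordSpan.2 ⟨c _, hc _, hsupp (J.equivFin ⟨j, hj⟩)⟩
  have hI : C ⊔ coordSpan F I = ⊤ := eq_top_iff.2 (hJ ▸ sup_le le_sup_left hJI)
  simpa using card_le_finrank_add_card hI

variable (C)

theorem isGenCovering_genCovRad (t : ℕ) : IsGenCovering C t (genCovRad C t) :=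
  Nat.sInf_mem (s := {r | IsGenCovering C t r})
    ⟨_, isGenCovering_card_of_sup_eq_top (I := .univ) (by rw [coordSpan_univ, sup_top_eq]) t⟩

theorem genCovRad_mono : Monotone (genCovRad C) := fun _ t₂ h =>
  Nat.sInf_le ((isGenCovering_genCovRad C t₂).of_le h)

variable {C}

theorem genCovRad_le_card {I : Finset (Fin n)} (h : C ⊔ coordSpan F I = ⊤) (t : ℕ) :
    genCovRad C t ≤ I.card :=
  Nat.sInf_le (isGenCovering_card_of_sup_eq_top h t)

end GenCovRad

theorem stmt5_general {F : Type*} [Field F] {n k : ℕ}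
    (C : Submodule F (Fin n → F)) (hdim : Module.finrank F C = k) :
    (∀ t₁ t₂ : ℕ, 1 ≤ t₁ → t₁ ≤ t₂ → t₂ ≤ n - k → genCovRad C t₁ ≤ genCovRad C t₂) ∧
    genCovRad C (n - k) = n - k := by
  obtain ⟨J, hJcard, hJ⟩ := exists_sup_coordSpan_eq_top C
  rw [Fintype.card_fin, hdim] at hJcard
  rw [show n - k = J.card by omega]
  refine ⟨fun t₁ t₂ _ h _ => genCovRad_mono C h, le_antisymm (genCovRad_le_card hJ _) ?_⟩
  have := (isGenCovering_genCovRad C J.card).card_le_finrank_add hJ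
  omega

/-- For an `[n,k]` code over `F_q` with `k < n`, the generalized covering radii are
monotone non-decreasing, `R_1 ≤ R_2 ≤ ⋯ ≤ R_{n−k}`, and `R_{n−k} = n − k`. -/
theorem stmt5 {F : Type*} [Field F] [Fintype F] {q n k : ℕ}
    (hq : Fintype.card F = q) (hkn : k < n)
    (C : Submodule F (Fin n → F)) (hdim : Module.finrank F C = k) :
    (∀ t₁ t₂ : ℕ, 1 ≤ t₁ → t₁ ≤ t₂ → t₂ ≤ n - k → genCovRad C t₁ ≤ genCovRad C t₂) ∧
    genCovRad C (n - k) = n - k :=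
  stmt5_general C hdim
end

section
/- Let C be a linear [n,k] code over F_q. Then for all positive integers t_1 and t_2, the generalized covering radii satisfy R_{t_1 + t_2}(C) ≤ R_{t_1}(C) + R_{t_2}(C). -/
lemma top_mem {F : Type*} [Field F] {n : ℕ} (C : Submodule F (Fin n → F)) (t : ℕ) :
    n ∈ { r | ∀ v : Fin t → (Fin n → F), ∃ c : Fin t → (Fin n → F),
    (∀ i, c i ∈ C) ∧ ∃ I : Finset (Fin n), I.card = r ∧
      ∀ i j, (v i - c i) j ≠ 0 → j ∈ I } := by
  intro v
  exact ⟨fun _ => 0, fun _ => C.zero_mem, Finset.univ, Finset.card_fin n,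
    fun _ j _ => Finset.mem_univ j⟩

/-- Subadditivity of the generalized covering radii:
`R_{t₁+t₂}(C) ≤ R_{t₁}(C) + R_{t₂}(C)` for all positive integers `t₁, t₂`. -/
theorem stmt6 {F : Type*} [Field F] [Fintype F] {q n k : ℕ}
    (hq : Fintype.card F = q)
    (C : Submodule F (Fin n → F)) (hdim : Module.finrank F C = k)
    (t₁ t₂ : ℕ) (ht₁ : 1 ≤ t₁) (ht₂ : 1 ≤ t₂) :
    genCovRad C (t₁ + t₂) ≤ genCovRad C t₁ + genCovRad C t₂ := by
  set r₁ := genCovRad C t₁ with hr₁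
  set r₂ := genCovRad C t₂ with hr₂
  by_cases hn : n ≤ r₁ + r₂
  · exact le_trans (Nat.sInf_le (top_mem C (t₁ + t₂))) hn
  push_neg at hn
  have h1 : r₁ ∈ _ := Nat.sInf_mem ⟨n, top_mem C t₁⟩
  have h2 : r₂ ∈ _ := Nat.sInf_mem ⟨n, top_mem C t₂⟩
  apply Nat.sInf_le
  intro v
  obtain ⟨c₁, hc₁, I₁, hI₁card, hI₁⟩ := h1 (fun i => v (Fin.castAdd t₂ i))
  obtain ⟨c₂, hc₂, I₂, hI₂card, hI₂⟩ := h2 (fun i => v (Fin.natAdd t₁ i))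
  have hcard : (I₁ ∪ I₂).card ≤ r₁ + r₂ := by
    calc (I₁ ∪ I₂).card ≤ I₁.card + I₂.card := Finset.card_union_le _ _
    _ = r₁ + r₂ := by rw [hI₁card, hI₂card]
  obtain ⟨I, hII, hIcard⟩ := Finset.exists_superset_card_eq hcard
    (by simpa using le_of_lt hn)
  refine ⟨fun i => Fin.addCases c₁ c₂ i, ?_, I, hIcard, ?_⟩
  · intro i
    refine Fin.addCases (fun i => ?_) (fun i => ?_) i
    · simpa using hc₁ i
    · simpa using hc₂ i
  · intro i j
    refine Fin.addCases (fun i hj => ?_) (fun i hj => ?_) i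
    · simp only [Fin.addCases_left] at hj
      exact hII (Finset.mem_union_left _ (hI₁ i j hj))
    · simp only [Fin.addCases_right] at hj
      exact hII (Finset.mem_union_right _ (hI₂ i j hj))
end

section
/- Let C be a linear [n,k] code over F_q with generator matrix G, let t ≥ 1 be an integer, and let C_t = {xG : x ∈ F_{q^t}^k} be the linear [n,k] code over F_{q^t} generated by the same matrix G. Then the t-th generalized covering radius of C equals the (ordinary) covering radius of C_t: R_t(C) = R_1(C_t). -/
/-!
A basis `b` of `E` over `F` cuts a vector `w : Fin n → E` into `t` coordinate slices
`j ↦ b.repr (w j) l` over `F`, and this is a bijection `(Fin n → E) ≃ (Fin t → Fin n → F)`.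
Since `G` has entries in `F`, the slices of `x ᵥ* G` are the products `x_l ᵥ* G` of the slices
of `x`, so the codewords of `C_t` are exactly the vectors all of whose slices lie in `C`.
Moreover `w j ≠ w' j` iff some slice differs at `j`, so the Hamming distance of two vectors over
`E` is the size of the joint support of the difference of their slices. Both covering radii are
therefore the least `r` such that every `t`-tuple is within joint support `r` of a `t`-tuple of
codewords. The definition of `R_t` also forces `r ≤ n`, which costs nothing since the zero
codewords already achieve `r = n`.
-/

theorem Nat.sInf_inter_Iic_of_mem {B : Set ℕ} {n : ℕ} (hn : n ∈ B) :
    sInf (B ∩ Set.Iic n) = sInf B := by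
  have hmem : sInf B ∈ B ∩ Set.Iic n := ⟨Nat.sInf_mem ⟨n, hn⟩, Nat.sInf_le hn⟩
  exact le_antisymm (Nat.sInf_le hmem) (Nat.sInf_le (Nat.sInf_mem ⟨_, hmem⟩).1)

section CoordinateSlices

open Finset Matrix

variable {F : Type*} [Field F]

open Classical in
noncomputable def jointSupport {ι m : Type*} [Fintype m] (v : ι → m → F) : Finset m :=
  univ.filter fun j => ∃ l, v l j ≠ 0

theorem mem_jointSupport {ι m : Type*} [Fintype m] {v : ι → m → F} {j : m} :
    j ∈ jointSupport v ↔ ∃ l, v l j ≠ 0 := by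
  classical
  simp [jointSupport]

theorem genCovRad_eq_sInf {n : ℕ} (C : Submodule F (Fin n → F)) (t : ℕ) :
    genCovRad C t = sInf {r | ∀ v : Fin t → Fin n → F, ∃ c : Fin t → Fin n → F,
      (∀ i, c i ∈ C) ∧ #(jointSupport (v - c)) ≤ r} := by
  have hn : n ∈ {r | ∀ v : Fin t → Fin n → F, ∃ c : Fin t → Fin n → F,
      (∀ i, c i ∈ C) ∧ #(jointSupport (v - c)) ≤ r} :=
    fun v => ⟨0, fun _ => C.zero_mem, (card_le_univ _).trans (Fintype.card_fin n).le⟩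
  rw [genCovRad, ← Nat.sInf_inter_Iic_of_mem hn]
  congr 1
  ext r
  simp only [Set.mem_ofPred_eq, Set.mem_inter_iff, Set.mem_Iic]
  constructor
  · intro hr
    refine ⟨fun v => ?_, ?_⟩
    · obtain ⟨c, hc, I, rfl, hI⟩ := hr v
      refine ⟨c, hc, card_le_card fun j hj => ?_⟩
      obtain ⟨l, hl⟩ := mem_jointSupport.1 hj
      exact hI l j hl
    · obtain ⟨_, _, I, rfl, _⟩ := hr 0
      simpa using card_le_univ I
  · rintro ⟨hr, hrn⟩ v
    obtain ⟨c, hc, hcard⟩ := hr v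
    obtain ⟨I, hsub, hI⟩ := exists_superset_card_eq hcard (by simpa using hrn)
    exact ⟨c, hc, I, hI, fun l j hl => hsub (mem_jointSupport.2 ⟨l, hl⟩)⟩

namespace Module.Basis

variable {E ι : Type*} [Field E] [Algebra F E] [Fintype ι] (b : Basis ι F E)

noncomputable def coordSlices (m : Type*) : (m → E) ≃ (ι → m → F) :=
  (Equiv.piCongrRight fun _ => b.equivFun.toEquiv).trans (Equiv.piComm _)

theorem coordSlices_apply {m : Type*} (w : m → E) (l : ι) (j : m) :
    b.coordSlices m w l j = b.repr (w j) l :=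
  rfl

theorem hammingDist_eq_card_jointSupport [DecidableEq E] {m : Type*} [Fintype m]
    (w w' : m → E) :
    hammingDist w w' = #(jointSupport (b.coordSlices m w - b.coordSlices m w')) := by
  unfold hammingDist
  congr 1
  ext j
  simp only [mem_filter, mem_univ, true_and, mem_jointSupport, Pi.sub_apply, coordSlices_apply,
    sub_ne_zero]
  rw [Ne, ← b.repr.injective.eq_iff, Finsupp.ext_iff]
  push Not
  rfl

theorem coordSlices_vecMul_map_algebraMap {k n : Type*} [Fintype k] (x : k → E)
    (G : Matrix k n F) (l : ι) :
    b.coordSlices n (x ᵥ* G.map (algebraMap F E)) l = b.coordSlices k x l ᵥ* G := by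
  ext j
  simp only [coordSlices_apply, vecMul, dotProduct, map_sum, Finsupp.finsetSum_apply]
  refine sum_congr rfl fun i _ => ?_
  rw [Matrix.map_apply, mul_comm, ← Algebra.smul_def, map_smul, Finsupp.smul_apply, smul_eq_mul,
    mul_comm]

theorem mem_range_vecMulLinear_map_algebraMap_iff {k n : Type*} [Fintype k]
    (G : Matrix k n F) (w : n → E) :
    w ∈ LinearMap.range (G.map (algebraMap F E)).vecMulLinear ↔
      ∀ l, b.coordSlices n w l ∈ LinearMap.range G.vecMulLinear := by
  constructor
  · rintro ⟨x, rfl⟩ l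
    exact ⟨b.coordSlices k x l, (b.coordSlices_vecMul_map_algebraMap x G l).symm⟩
  · intro hw
    choose y hy using hw
    refine ⟨(b.coordSlices k).symm y, (b.coordSlices n).injective (funext fun l => ?_)⟩
    rw [vecMulLinear_apply, coordSlices_vecMul_map_algebraMap, Equiv.apply_symm_apply, ← hy l,
      vecMulLinear_apply]

theorem covRad_eq_sInf [DecidableEq E] {n : ℕ} (C : Submodule F (Fin n → F))
    (Ct : Submodule E (Fin n → E)) (hCt : ∀ w, w ∈ Ct ↔ ∀ l, b.coordSlices _ w l ∈ C) :
    covRad E Ct = sInf {r | ∀ v : ι → Fin n → F, ∃ c : ι → Fin n → F,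
      (∀ i, c i ∈ C) ∧ #(jointSupport (v - c)) ≤ r} := by
  unfold covRad
  congr 1
  ext r
  simp only [Set.mem_ofPred_eq]
  refine (b.coordSlices _).forall_congr fun {w} => ?_
  refine ⟨fun ⟨c, hc, hd⟩ => ⟨b.coordSlices _ c, (hCt c).1 hc, ?_⟩,
    fun ⟨c, hc, hd⟩ => ⟨(b.coordSlices _).symm c, (hCt _).2 ?_, ?_⟩⟩
  · rwa [← b.hammingDist_eq_card_jointSupport]
  · simpa using hc
  · rwa [b.hammingDist_eq_card_jointSupport, Equiv.apply_symm_apply]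

end Module.Basis

end CoordinateSlices

theorem stmt7_general {F E : Type*} [Field F] [Fintype F] [Field E] [Fintype E] [DecidableEq E]
    [Algebra F E] {q t n k : ℕ}
    (hq : Fintype.card F = q) (hE : Fintype.card E = q ^ t)
    (G : Matrix (Fin k) (Fin n) F)
    (C : Submodule F (Fin n → F)) (hC : C = Submodule.span F (Set.range G))
    (Ct : Submodule E (Fin n → E))
    (hCt : Ct = LinearMap.range (Matrix.vecMulLinear (G.map (algebraMap F E)))) :
    genCovRad C t = covRad E Ct := by
  have hdeg : Module.finrank F E = t := by
    have hcard := Module.card_eq_pow_finrank (K := F) (V := E)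
    rw [hq, hE] at hcard
    exact Nat.pow_right_injective (hq ▸ Fintype.one_lt_card) hcard.symm
  let b : Module.Basis (Fin t) F E := (Module.finBasis F E).reindex (finCongr hdeg)
  have hC' : C = LinearMap.range G.vecMulLinear := by rw [hC, range_vecMulLinear]; rfl
  rw [genCovRad_eq_sInf, b.covRad_eq_sInf C Ct]
  intro w
  rw [hCt, hC']
  exact b.mem_range_vecMulLinear_map_algebraMap_iff G w

/-- If `C` is an `[n,k]` code over `F_q` with generator matrix `G`, and `C_t` is the
`[n,k]` code over `F_{q^t}` generated by the same matrix `G` (i.e. `{xG : x ∈ F_{q^t}^k}`),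
then `R_t(C) = R_1(C_t)`. -/
theorem stmt7 {F E : Type*} [Field F] [Fintype F] [Field E] [Fintype E] [DecidableEq E]
    [Algebra F E] {q t n k : ℕ}
    (hq : Fintype.card F = q) (hE : Fintype.card E = q ^ t) (ht : 1 ≤ t)
    (G : Matrix (Fin k) (Fin n) F)
    (C : Submodule F (Fin n → F)) (hC : C = Submodule.span F (Set.range G))
    (hdim : Module.finrank F C = k)
    (Ct : Submodule E (Fin n → E))
    (hCt : Ct = LinearMap.range (Matrix.vecMulLinear (G.map (algebraMap F E)))) :
    genCovRad C t = covRad E Ct :=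
  stmt7_general hq hE G C hC Ct hCt
end

section
/- Let C be a linear [n,k] code over F_q with k < n whose covering radius satisfies R_1(C) = 1. Then for every integer t with 1 ≤ t ≤ n − k, the t-th generalized covering radius satisfies R_t(C) = t. -/
section GeneralizedCoveringRadius

variable {F : Type*} [Field F] {n : ℕ} (C : Submodule F (Fin n → F))

/-- `r` belongs to the set whose infimum is `genCovRad C t`. -/
def CoversWithin (t r : ℕ) : Prop :=
  ∀ v : Fin t → (Fin n → F), ∃ c : Fin t → (Fin n → F),
    (∀ i, c i ∈ C) ∧ ∃ I : Finset (Fin n), I.card = r ∧ ∀ i j, (v i - c i) j ≠ 0 → j ∈ I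

variable {C}

theorem genCovRad_le {t r : ℕ} (h : CoversWithin C t r) : genCovRad C t ≤ r :=
  Nat.sInf_le h

theorem coversWithin_genCovRad {t : ℕ} (h : ∃ r, CoversWithin C t r) :
    CoversWithin C t (genCovRad C t) :=
  Nat.sInf_mem h

theorem coversWithin_of_card_le {t r : ℕ} (hrn : r ≤ n)
    (h : ∀ v : Fin t → (Fin n → F), ∃ c : Fin t → (Fin n → F),
      (∀ i, c i ∈ C) ∧ ∃ I : Finset (Fin n), I.card ≤ r ∧ ∀ i j, (v i - c i) j ≠ 0 → j ∈ I) :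
    CoversWithin C t r := by
  intro v
  obtain ⟨c, hc, I, hI, hsupp⟩ := h v
  obtain ⟨J, hIJ, hJ⟩ := Finset.exists_superset_card_eq hI (by simpa using hrn)
  exact ⟨c, hc, J, hJ, fun i j hj => hIJ (hsupp i j hj)⟩

theorem CoversWithin.mul {r : ℕ} (h : CoversWithin C 1 r) (t : ℕ) (htr : t * r ≤ n) :
    CoversWithin C t (t * r) := by
  classical
  refine coversWithin_of_card_le htr fun v => ?_
  choose c hc I hI hsupp using fun i => h fun _ => v i
  refine ⟨fun i => c i 0, fun i => hc i 0, Finset.univ.biUnion I, ?_, fun i j hj =>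
    Finset.mem_biUnion.2 ⟨i, Finset.mem_univ i, hsupp i 0 j hj⟩⟩
  calc (Finset.univ.biUnion I).card ≤ ∑ i, (I i).card := Finset.card_biUnion_le
    _ = t * r := by simp [hI]

theorem card_le_of_linearIndependent_mkQ {t : ℕ} {v c : Fin t → (Fin n → F)}
    (hv : LinearIndependent F (C.mkQ ∘ v)) (hc : ∀ i, c i ∈ C) {I : Finset (Fin n)}
    (hsupp : ∀ i j, (v i - c i) j ≠ 0 → j ∈ I) : t ≤ I.card := by
  set E := Submodule.span F (Pi.basisFun F (Fin n) '' I)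
  have hrange : Submodule.span F (Set.range (C.mkQ ∘ v)) ≤ E.map C.mkQ := by
    rw [Submodule.span_le]
    rintro _ ⟨i, rfl⟩
    have hvcE : v i - c i ∈ E := (Pi.basisFun F (Fin n)).mem_span_image.2 fun j hj =>
      hsupp i j (by simpa using hj)
    have hvc : C.mkQ (v i - c i) = C.mkQ (v i) := by
      rw [map_sub, C.mkQ_apply (c i), (Submodule.Quotient.mk_eq_zero C).2 (hc i), sub_zero]
    change C.mkQ (v i) ∈ _
    exact hvc ▸ Submodule.mem_map_of_mem hvcE
  calc t = Module.finrank F (Submodule.span F (Set.range (C.mkQ ∘ v))) := by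
        rw [finrank_span_eq_card hv, Fintype.card_fin]
    _ ≤ Module.finrank F (E.map C.mkQ) := Submodule.finrank_mono hrange
    _ ≤ Module.finrank F E := Submodule.finrank_map_le _ _
    _ ≤ Fintype.card I := by
        unfold E
        rw [Set.image_eq_range]
        exact finrank_range_le_card _
    _ = I.card := Fintype.card_coe I

theorem exists_linearIndependent_mkQ {t : ℕ} (ht : t ≤ n - Module.finrank F C) :
    ∃ v : Fin t → (Fin n → F), LinearIndependent F (C.mkQ ∘ v) := by
  have hQ : Module.finrank F ((Fin n → F) ⧸ C) = n - Module.finrank F C := by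
    have := Submodule.finrank_quotient_add_finrank C
    rw [Module.finrank_fin_fun] at this
    omega
  let b := Module.finBasis F ((Fin n → F) ⧸ C)
  have htQ : t ≤ Module.finrank F ((Fin n → F) ⧸ C) := hQ ▸ ht
  choose v hv using fun i => Submodule.Quotient.mk_surjective C (b (Fin.castLE htQ i))
  refine ⟨v, ?_⟩
  convert b.linearIndependent.comp _ (Fin.castLE_injective htQ)
  ext i
  exact hv i

theorem le_of_coversWithin {t r : ℕ} (ht : t ≤ n - Module.finrank F C) (h : CoversWithin C t r) :
    t ≤ r := by
  obtain ⟨v, hv⟩ := exists_linearIndependent_mkQ ht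
  obtain ⟨c, hc, I, rfl, hsupp⟩ := h v
  exact card_le_of_linearIndependent_mkQ hv hc hsupp

end GeneralizedCoveringRadius

theorem stmt8_general {F : Type*} [Field F] {n k : ℕ}
    (C : Submodule F (Fin n → F)) (hdim : Module.finrank F C = k)
    (hR1 : genCovRad C 1 = 1) :
    ∀ t : ℕ, 1 ≤ t → t ≤ n - k → genCovRad C t = t := by
  intro t _ htk
  have h1 : CoversWithin C 1 1 := by
    have := coversWithin_genCovRad (Nat.nonempty_of_pos_sInf (hR1 ▸ Nat.one_pos))
    rwa [hR1] at this
  have ht : CoversWithin C t t := by simpa using h1.mul t (by omega)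
  exact le_antisymm (genCovRad_le ht)
    (le_of_coversWithin (hdim ▸ htk) (coversWithin_genCovRad ⟨t, ht⟩))

/-- If an `[n,k]` code over `F_q` with `k < n` has covering radius `1`, then
`R_t(C) = t` for every `1 ≤ t ≤ n − k`. -/
theorem stmt8 {F : Type*} [Field F] [Fintype F] {q n k : ℕ}
    (hq : Fintype.card F = q) (hkn : k < n)
    (C : Submodule F (Fin n → F)) (hdim : Module.finrank F C = k)
    (hR1 : genCovRad C 1 = 1) :
    ∀ t : ℕ, 1 ≤ t → t ≤ n - k → genCovRad C t = t :=
  stmt8_general C hdim hR1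
end

section
/- Let r, m be integers with 0 ≤ r ≤ m and let ρ(r,m) = Σ_{i=0}^{r} C(m,i) (sum of binomial coefficients). Then every integer t with 1 ≤ t ≤ ρ(r,m) can be written as t = Σ_{i=1}^{k} ρ(r_i, m_i) for some k ≥ 1, where r_1 ≥ r_2 ≥ ... ≥ r_k ≥ 0 (non-increasing) and m_i − r_i = m − r − i + 1 for every i ∈ {1,...,k}; moreover this representation is unique. -/
/-- `rho r m = Σ_{i=0}^{r} C(m,i)`, the dimension of the binary Reed–Muller code `RM(r,m)`. -/
def rho (r m : ℕ) : ℕ := ∑ i ∈ Finset.range (r + 1), Nat.choose m i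

/-!
Put `d = m - r` and let `term d j a = ρ(a, a + d - j)` be the summand in (zero-based) position `j`
with degree `a`. Pascal's rule `ρ(a+1, m+1) = ρ(a+1, m) + ρ(a, m)` reads
`term d j (a+1) = term d j a + term d (j+1) (a+1)`, and telescoping it shows that a canonical
sequence from position `j` with all entries `≤ a` sums to less than `term d j (a+1)`. So the first
degree of a representation of `t` is forced to be the unique `a` with
`term d j a ≤ t < term d j (a+1)`; choosing it greedily and recursing on `t - term d j a` at
position `j + 1` gives existence, and the same bound gives uniqueness.
-/

theorem rho_pos (r m : ℕ) : 0 < rho r m :=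
  Finset.sum_pos' (fun _ _ => Nat.zero_le _) ⟨0, by simp, by simp⟩

theorem rho_zero_right (r : ℕ) : rho r 0 = 1 := by
  simp [rho, Finset.sum_range_succ']

theorem rho_succ_succ (r m : ℕ) : rho (r + 1) (m + 1) = rho (r + 1) m + rho r m := by
  simp only [rho, Finset.sum_range_succ' _ (r + 1), Nat.choose_succ_succ, Finset.sum_add_distrib,
    Nat.choose_zero_right]
  ring

theorem Fin.antitone_cons {α : Type*} [Preorder α] {n : ℕ} {f : Fin n → α} {a : α} :
    Antitone (Fin.cons a f : Fin (n + 1) → α) ↔ (∀ i, f i ≤ a) ∧ Antitone f := by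
  simp only [antitone_iff_forall_lt]
  exact Fin.liftFun_cons (α := α) (· ≥ ·) (f := f) (a := a)

theorem Nat.exists_le_and_lt_succ {f : ℕ → ℕ} {t N : ℕ} (h₀ : f 0 ≤ t) (hN : t < f N) :
    ∃ n, f n ≤ t ∧ t < f (n + 1) := by
  induction N with
  | zero => exact absurd hN h₀.not_gt
  | succ N ih =>
    by_cases h : f N ≤ t
    · exact ⟨N, h, hN⟩
    · exact ih (not_le.mp h)

namespace CanonicalRep

variable (d : ℕ)

/-- `ρ(a, m)` with `m - a = d - j`. Canonical sequences keep `j ≤ a + d`, so the truncated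
subtraction never bites. -/
def term (j a : ℕ) : ℕ := rho a (a + d - j)

def IsCanonical (j : ℕ) {k : ℕ} (a : Fin k → ℕ) : Prop :=
  Antitone a ∧ ∀ i : Fin k, j + i ≤ a i + d

def value (j : ℕ) {k : ℕ} (a : Fin k → ℕ) : ℕ := ∑ i : Fin k, term d (j + i) (a i)

variable {d}

theorem term_pos (j a : ℕ) : 0 < term d j a := rho_pos _ _

theorem term_succ {j a : ℕ} (h : j ≤ a + d) :
    term d j (a + 1) = term d j a + term d (j + 1) (a + 1) := by
  rw [term, term, term, show a + 1 + d - j = a + d - j + 1 by omega,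
    show a + 1 + d - (j + 1) = a + d - j by omega, rho_succ_succ, add_comm]

theorem term_of_le {j a : ℕ} (h : a + d ≤ j) : term d j a = 1 := by
  rw [term, Nat.sub_eq_zero_of_le h, rho_zero_right]

theorem term_mono (j : ℕ) : Monotone (term d j) := by
  refine monotone_nat_of_le_succ fun a => ?_
  by_cases h : j ≤ a + d
  · exact (term_succ h).symm ▸ Nat.le_add_right _ _
  · rw [term_of_le (d := d) (by omega)]
    exact term_pos _ _

theorem exists_term_le_lt (j : ℕ) {t : ℕ} (ht : 1 ≤ t) :
    ∃ a, j ≤ a + d ∧ term d j a ≤ t ∧ t < term d j (a + 1) := by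
  have hmono : StrictMono fun n => term d j (j - d + n) := strictMono_nat_of_lt_succ fun n => by
    rw [← add_assoc, term_succ (a := j - d + n) (by omega)]
    exact Nat.lt_add_of_pos_right (term_pos _ _)
  have h₀ : term d j (j - d) = 1 := by
    rcases le_total j d with h | h
    · rw [term, Nat.sub_eq_zero_of_le h]; simp [rho]
    · exact term_of_le (by omega)
  obtain ⟨n, hle, hlt⟩ := Nat.exists_le_and_lt_succ (f := fun n => term d j (j - d + n))
    (by simpa [h₀] using ht) ((hmono.id_le (t + 1)).trans_lt' (Nat.lt_succ_self t))
  exact ⟨j - d + n, by omega, hle, hlt⟩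

theorem value_cons (j a : ℕ) {k : ℕ} (b : Fin k → ℕ) :
    value d j (Fin.cons a b : Fin (k + 1) → ℕ) = term d j a + value d (j + 1) b := by
  simp [value, Fin.sum_univ_succ, add_right_comm, add_assoc]

theorem isCanonical_cons {j a k : ℕ} {b : Fin k → ℕ} :
    IsCanonical d j (Fin.cons a b : Fin (k + 1) → ℕ) ↔
      j ≤ a + d ∧ (∀ i, b i ≤ a) ∧ IsCanonical d (j + 1) b := by
  simp only [IsCanonical, Fin.antitone_cons, Fin.forall_fin_succ, Fin.cons_zero, Fin.cons_succ,
    Fin.val_zero, Fin.val_succ, add_zero]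
  constructor
  · rintro ⟨⟨hba, hb⟩, hj, hi⟩
    exact ⟨hj, hba, hb, fun i => by have := hi i; omega⟩
  · rintro ⟨hj, hba, hb, hi⟩
    exact ⟨⟨hba, hb⟩, hj, fun i => by have := hi i; omega⟩

theorem value_eq_zero_iff {j k : ℕ} {a : Fin k → ℕ} : value d j a = 0 ↔ k = 0 := by
  simp [value, Finset.sum_eq_zero_iff, (term_pos _ _).ne', ← isEmpty_iff,
    ← Fintype.card_eq_zero_iff]

theorem value_zero_eq {k : ℕ} (a : Fin k → ℕ) :
    value d 0 a = ∑ i : Fin k, rho (a i) (a i + d - i) := by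
  simp [value, term]

theorem term_head_le_value {j k : ℕ} (a : Fin (k + 1) → ℕ) :
    term d j (a 0) ≤ value d j a := by
  simpa [value] using Finset.single_le_sum (f := fun i : Fin (k + 1) => term d (j + i) (a i))
    (fun _ _ => Nat.zero_le _) (Finset.mem_univ 0)

theorem value_lt_term_succ {j k a : ℕ} {b : Fin k → ℕ} (hb : IsCanonical d j b)
    (hba : ∀ i, b i ≤ a) : value d j b < term d j (a + 1) := by
  induction k generalizing j a with
  | zero => simpa [value] using term_pos j (a + 1)
  | succ k ih =>
    cases b using Fin.consCases with
    | cons b₀ b =>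
      obtain ⟨hj, hb₀, hb⟩ := isCanonical_cons.mp hb
      calc value d j (Fin.cons b₀ b : Fin (k + 1) → ℕ)
          < term d j b₀ + term d (j + 1) (b₀ + 1) := by
            rw [value_cons]; exact Nat.add_lt_add_left (ih hb hb₀) _
        _ = term d j (b₀ + 1) := (term_succ hj).symm
        _ ≤ term d j (a + 1) := term_mono j (Nat.succ_le_succ (by simpa using hba 0))

theorem le_of_value_lt_term_succ {j k a : ℕ} {b : Fin k → ℕ} (hb : IsCanonical d j b)
    (h : value d j b < term d j (a + 1)) (i : Fin k) : b i ≤ a := by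
  obtain ⟨k, rfl⟩ := Nat.exists_eq_succ_of_ne_zero i.pos.ne'
  have : b 0 < a + 1 := (term_mono j).reflect_lt ((term_head_le_value b).trans_lt h)
  exact (hb.1 (Fin.zero_le i)).trans (Nat.lt_succ_iff.mp this)

theorem exists_isCanonical_value_eq (t j : ℕ) :
    ∃ k, ∃ a : Fin k → ℕ, IsCanonical d j a ∧ value d j a = t := by
  induction t using Nat.strong_induction_on generalizing j with
  | _ t ih =>
    rcases Nat.eq_zero_or_pos t with rfl | ht
    · exact ⟨0, Fin.elim0, ⟨fun i => i.elim0, fun i => i.elim0⟩, by simp [value]⟩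
    obtain ⟨a, hj, hle, hlt⟩ := exists_term_le_lt (d := d) j ht
    obtain ⟨k, b, hb, hbt⟩ := ih (t - term d j a) (Nat.sub_lt ht (term_pos j a)) (j + 1)
    have hba : ∀ i, b i ≤ a := le_of_value_lt_term_succ hb (by rw [term_succ hj] at hlt; omega)
    refine ⟨k + 1, Fin.cons a b, isCanonical_cons.mpr ⟨hj, hba, hb⟩, ?_⟩
    rw [value_cons]
    omega

theorem head_eq_of_value_eq {j k l : ℕ} {a : Fin (k + 1) → ℕ} {b : Fin (l + 1) → ℕ}
    (ha : IsCanonical d j a) (hb : IsCanonical d j b) (h : value d j a = value d j b) :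
    a 0 = b 0 := by
  have ha' := value_lt_term_succ ha fun i => ha.1 (Fin.zero_le i)
  have hb' := value_lt_term_succ hb fun i => hb.1 (Fin.zero_le i)
  exact le_antisymm
    (Nat.lt_succ_iff.mp ((term_mono j).reflect_lt ((term_head_le_value a).trans_lt (h ▸ hb'))))
    (Nat.lt_succ_iff.mp ((term_mono j).reflect_lt ((term_head_le_value b).trans_lt (h ▸ ha'))))

theorem eq_of_value_eq {j k l : ℕ} {a : Fin k → ℕ} {b : Fin l → ℕ}
    (ha : IsCanonical d j a) (hb : IsCanonical d j b) (h : value d j a = value d j b) :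
    (⟨k, a⟩ : Σ n, Fin n → ℕ) = ⟨l, b⟩ := by
  induction k generalizing j l with
  | zero =>
    cases l with
    | zero => exact Sigma.ext rfl (heq_of_eq (funext fun i => i.elim0))
    | succ l => exact absurd (value_eq_zero_iff.mp (h ▸ value_eq_zero_iff.mpr rfl)) l.succ_ne_zero
  | succ k ih =>
    cases l with
    | zero => exact absurd (value_eq_zero_iff.mp (h ▸ value_eq_zero_iff.mpr rfl)) k.succ_ne_zero
    | succ l =>
      have h₀ := head_eq_of_value_eq ha hb h
      cases a using Fin.consCases with
      | cons a₀ a =>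
        cases b using Fin.consCases with
        | cons b₀ b =>
          simp only [Fin.cons_zero] at h₀
          subst h₀
          rw [value_cons, value_cons, Nat.add_left_cancel_iff] at h
          obtain ⟨rfl, hab⟩ := Sigma.mk.inj_iff.mp
            (ih (isCanonical_cons.mp ha).2.2 (isCanonical_cons.mp hb).2.2 h)
          rw [eq_of_heq hab]

end CanonicalRep

/-- A representation is `⟨k, fun i => (rᵢ, mᵢ)⟩` with zero-based `i`; the condition
`mᵢ − rᵢ = m − r − i + 1` is encoded over `ℕ` as `mᵢ + i = rᵢ + (m − r)`. -/
theorem stmt9_general {r m t : ℕ} (ht1 : 1 ≤ t) :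
    ∃! rep : (k : ℕ) × (Fin k → ℕ × ℕ),
      0 < rep.1 ∧
      (∀ i j : Fin rep.1, i ≤ j → (rep.2 j).1 ≤ (rep.2 i).1) ∧
      (∀ i : Fin rep.1, (rep.2 i).2 + i.1 = (rep.2 i).1 + (m - r)) ∧
      t = ∑ i : Fin rep.1, rho (rep.2 i).1 (rep.2 i).2 := by
  open CanonicalRep in
  obtain ⟨k, a, ha, rfl⟩ := exists_isCanonical_value_eq (d := m - r) t 0
  refine ⟨⟨k, fun i => (a i, a i + (m - r) - i)⟩,
    ⟨?_, ha.1, fun i => ?_, value_zero_eq a⟩, ?_⟩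
  · exact Nat.pos_of_ne_zero fun hk => by rw [value_eq_zero_iff.mpr hk] at ht1; omega
  · have := ha.2 i; dsimp only; omega
  rintro ⟨l, f⟩ ⟨-, hf, hdiff, hsum⟩
  dsimp only at hf hdiff hsum
  have hsnd (i : Fin l) : (f i).2 = (f i).1 + (m - r) - i := by have := hdiff i; omega
  have hfc : IsCanonical (m - r) 0 fun i => (f i).1 :=
    ⟨hf, fun i => by have := hdiff i; dsimp only; omega⟩
  have hval : value (m - r) 0 (fun i => (f i).1) = value (m - r) 0 a := by
    rw [hsum, value_zero_eq]
    exact Finset.sum_congr rfl fun i _ => by rw [hsnd]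
  obtain ⟨rfl, ⟨⟩⟩ := Sigma.mk.inj_iff.mp (eq_of_value_eq hfc ha hval)
  exact Sigma.ext rfl (heq_of_eq (funext fun i => Prod.ext rfl (hsnd i)))

/-- Canonical `(r,m)`-representation: every `1 ≤ t ≤ rho r m` can be written uniquely as
`t = Σ_{i=1}^{k} rho rᵢ mᵢ` with `k ≥ 1`, `r₁ ≥ r₂ ≥ ⋯ ≥ r_k` and `mᵢ − rᵢ = m − r − i + 1`
(encoded over `ℕ`, with zero-based `i`, as `mᵢ + i = rᵢ + (m − r)`).
A representation is a pair `rep = ⟨k, fun i => (rᵢ, mᵢ)⟩`. -/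
theorem stmt9 {r m t : ℕ} (hrm : r ≤ m) (ht1 : 1 ≤ t) (ht2 : t ≤ rho r m) :
    ∃! rep : (k : ℕ) × (Fin k → ℕ × ℕ),
      0 < rep.1 ∧
      (∀ i j : Fin rep.1, i ≤ j → (rep.2 j).1 ≤ (rep.2 i).1) ∧
      (∀ i : Fin rep.1, (rep.2 i).2 + i.1 = (rep.2 i).1 + (m - r)) ∧
      t = ∑ i : Fin rep.1, rho (rep.2 i).1 (rep.2 i).2 :=
  stmt9_general ht1
end

section
/- Let C be a linear [n,k] code over F_q with k < n, and let H be a parity check matrix of C (an (n−k)×n matrix over F_q of rank n−k whose kernel, as the set of vectors x with Hx^T = 0, is exactly C). Then for every r ∈ {1,...,k}, the r-th generalized Hamming weight satisfies d_r(C) = min{|I| : I ⊆ {1,...,n}, |I| − rank(H_I) ≥ r}, where H_I denotes the submatrix of H consisting of the columns indexed by I. -/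
section Aux

variable {F : Type*} [Field F]

/-- Sum over a subtype equals total sum when the function vanishes off the finset. -/
lemma aux_sum_subtype {α M : Type*} [Fintype α] [AddCommMonoid M] (I : Finset α)
    (g : α → M) (hg : ∀ j ∉ I, g j = 0) :
    ∑ j : {x : α // x ∈ I}, g ↑j = ∑ j, g j := by
  rw [Finset.sum_coe_sort I g]
  exact Finset.sum_subset (Finset.subset_univ I) (fun x _ hx => hg x hx)

/-- Extension-by-zero linear map. -/
noncomputable def extZero {n : ℕ} (I : Finset (Fin n)) :
    ({x : Fin n // x ∈ I} → F) →ₗ[F] (Fin n → F) where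
  toFun y j := if h : j ∈ I then y ⟨j, h⟩ else 0
  map_add' y z := by ext j; by_cases h : j ∈ I <;> simp [h]
  map_smul' c y := by ext j; by_cases h : j ∈ I <;> simp [h]

lemma extZero_apply_mem {n : ℕ} (I : Finset (Fin n)) (y : {x : Fin n // x ∈ I} → F)
    (j : {x : Fin n // x ∈ I}) : extZero I y ↑j = y j := by
  simp [extZero]

lemma extZero_apply_not_mem {n : ℕ} (I : Finset (Fin n)) (y : {x : Fin n // x ∈ I} → F)
    {j : Fin n} (hj : j ∉ I) : extZero I y j = 0 := by
  simp [extZero, hj]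

lemma extZero_injective {n : ℕ} (I : Finset (Fin n)) :
    Function.Injective (extZero (F := F) I) := by
  intro y z h
  funext j
  have := congrFun h (↑j : Fin n)
  rwa [extZero_apply_mem, extZero_apply_mem] at this

/-- A finite-dimensional space has subspaces of every smaller dimension, inside a given
submodule. -/
lemma exists_subspace_finrank {M : Type*} [AddCommGroup M] [Module F M]
    (K : Submodule F M) (r : ℕ) (h : r ≤ Module.finrank F K) :
    ∃ D : Submodule F M, D ≤ K ∧ Module.finrank F D = r := by
  obtain ⟨f, hf⟩ := exists_linearIndependent_of_le_finrank h
  have hg : LinearIndependent F (K.subtype ∘ f) :=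
    hf.map' K.subtype (Submodule.ker_subtype K)
  refine ⟨Submodule.span F (Set.range (K.subtype ∘ f)), ?_, ?_⟩
  · rw [Submodule.span_le]
    rintro _ ⟨i, rfl⟩
    exact (f i).2
  · rw [finrank_span_eq_card hg, Fintype.card_fin]

end Aux

/-- If `H` is a parity check matrix of an `[n,k]` code `C` over `F_q`, then for every
`1 ≤ r ≤ k`, `d_r(C) = min{|I| : I ⊆ [n], |I| − rank(H_I) ≥ r}`. -/
theorem stmt14 {F : Type*} [Field F] [Fintype F] {q n k : ℕ}
    (hq : Fintype.card F = q) (hkn : k < n)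
    (H : Matrix (Fin (n - k)) (Fin n) F) (hrank : H.rank = n - k)
    (C : Submodule F (Fin n → F)) (hC : C = LinearMap.ker H.mulVecLin)
    (hdim : Module.finrank F C = k) :
    ∀ r, 1 ≤ r → r ≤ k →
      GHW F C r = sInf { w | ∃ I : Finset (Fin n),
        r ≤ I.card - (H.submatrix id (fun j : { x : Fin n // x ∈ I } => (j : Fin n))).rank ∧
        w = I.card } := by
  intro r hr1 hrk
  -- rank-nullity for the column submatrices
  have kerdim : ∀ I : Finset (Fin n),
      Module.finrank F (LinearMap.ker (H.submatrix id
        (fun j : { x : Fin n // x ∈ I } => (j : Fin n))).mulVecLin) =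
      I.card - (H.submatrix id (fun j : { x : Fin n // x ∈ I } => (j : Fin n))).rank := by
    intro I
    have h1 := LinearMap.finrank_range_add_finrank_ker
      (H.submatrix id (fun j : { x : Fin n // x ∈ I } => (j : Fin n))).mulVecLin
    have h2 : Module.finrank F ({ x : Fin n // x ∈ I } → F) = I.card := by
      simp [Module.finrank_pi]
    have h3 : (H.submatrix id (fun j : { x : Fin n // x ∈ I } => (j : Fin n))).rank =
        Module.finrank F (LinearMap.range (H.submatrix id
          (fun j : { x : Fin n // x ∈ I } => (j : Fin n))).mulVecLin) := rfl
    rw [h2] at h1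
    omega
  -- key computation relating mulVec of H and submatrices
  have key : ∀ (I : Finset (Fin n)) (x : Fin n → F), (∀ j ∉ I, x j = 0) →
      (H.submatrix id (fun j : { x : Fin n // x ∈ I } => (j : Fin n))).mulVec
        (fun j => x ↑j) = H.mulVec x := by
    intro I x hx
    funext i
    simp only [Matrix.mulVec, dotProduct, Matrix.submatrix_apply, id_eq]
    exact aux_sum_subtype I (fun j => H i j * x j) (fun j hj => by simp [hx j hj])
  -- the RHS set is nonempty
  have hne2 : { w | ∃ I : Finset (Fin n),
      r ≤ I.card - (H.submatrix id (fun j : { x : Fin n // x ∈ I } => (j : Fin n))).rank ∧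
      w = I.card }.Nonempty := by
    refine ⟨n, Finset.univ, ?_, by simp⟩
    have h1 : (H.submatrix id (fun j : { x : Fin n // x ∈ (Finset.univ : Finset (Fin n)) } =>
        (j : Fin n))).rank ≤ n - k := by
      calc _ ≤ Fintype.card (Fin (n - k)) := Matrix.rank_le_card_height _
        _ = n - k := Fintype.card_fin _
    rw [Finset.card_univ, Fintype.card_fin]
    omega
  -- the GHW set is nonempty
  have hne1 : { w | ∃ D : Submodule F (Fin n → F), D ≤ C ∧ Module.finrank F D = r ∧
      { i | ∃ x ∈ D, x i ≠ 0 }.ncard = w }.Nonempty := by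
    obtain ⟨D, hD, hDr⟩ := exists_subspace_finrank C r (le_of_le_of_eq hrk hdim.symm)
    exact ⟨_, D, hD, hDr, rfl⟩
  apply le_antisymm
  · -- GHW ≤ sInf RHS
    obtain ⟨I, hIr, hIw⟩ := Nat.sInf_mem hne2
    set M := H.submatrix id (fun j : { x : Fin n // x ∈ I } => (j : Fin n)) with hM
    obtain ⟨D', hD', hD'r⟩ := exists_subspace_finrank (LinearMap.ker M.mulVecLin) r
      (by rw [kerdim I]; exact hIr)
    set D := Submodule.map (extZero I) D' with hD
    have hDC : D ≤ C := by
      rintro _ ⟨y, hy, rfl⟩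
      rw [hC, LinearMap.mem_ker, Matrix.mulVecLin_apply]
      have hy' : M.mulVec y = 0 := hD' hy
      rw [← key I (extZero I y) (fun j hj => extZero_apply_not_mem I y hj)]
      have : (fun j : { x : Fin n // x ∈ I } => extZero I y ↑j) = y := by
        funext j; exact extZero_apply_mem I y j
      rw [this, hy']
    have hDr : Module.finrank F D = r := by
      rw [hD, ← hD'r]
      exact (Submodule.equivMapOfInjective _ (extZero_injective I) D').symm.finrank_eq
    have hsupp : { i | ∃ x ∈ D, x i ≠ 0 } ⊆ ↑I := by
      rintro i ⟨x, hx, hxi⟩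
      by_contra hiI
      obtain ⟨y, _, rfl⟩ := hx
      exact hxi (extZero_apply_not_mem I y hiI)
    have hcard : { i | ∃ x ∈ D, x i ≠ 0 }.ncard ≤ I.card := by
      have := Set.ncard_le_ncard hsupp I.finite_toSet
      rwa [Set.ncard_coe_finset] at this
    calc GHW F C r ≤ { i | ∃ x ∈ D, x i ≠ 0 }.ncard :=
          Nat.sInf_le ⟨D, hDC, hDr, rfl⟩
      _ ≤ I.card := hcard
      _ = _ := hIw.symm
  · -- sInf RHS ≤ GHW
    obtain ⟨D, hDC, hDr, hw⟩ := Nat.sInf_mem hne1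
    apply Nat.sInf_le
    rw [Set.mem_setOf_eq]
    classical
    set S := { i | ∃ x ∈ D, x i ≠ 0 } with hS
    have hSfin : S.Finite := Set.toFinite S
    refine ⟨hSfin.toFinset, ?_, ?_⟩
    · set I := hSfin.toFinset with hI
      set M := H.submatrix id (fun j : { x : Fin n // x ∈ I } => (j : Fin n)) with hM
      -- restriction map
      let ρ : (Fin n → F) →ₗ[F] ({ x : Fin n // x ∈ I } → F) :=
        LinearMap.pi (fun j => LinearMap.proj (↑j : Fin n))
      have hρ : ∀ (x : Fin n → F) (j : { x : Fin n // x ∈ I }), ρ x j = x ↑j := fun _ _ => rfl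
      have hvanish : ∀ x ∈ D, ∀ j ∉ I, x j = 0 := by
        intro x hx j hj
        by_contra hxj
        exact hj (by rw [hI, Set.Finite.mem_toFinset]; exact ⟨x, hx, hxj⟩)
      let φ : D →ₗ[F] ({ x : Fin n // x ∈ I } → F) := ρ.comp D.subtype
      have hφinj : Function.Injective φ := by
        rw [← LinearMap.ker_eq_bot, LinearMap.ker_eq_bot']
        rintro ⟨x, hx⟩ hφx
        apply Subtype.ext
        funext j
        by_cases hj : j ∈ I
        · exact congrFun hφx ⟨j, hj⟩
        · exact hvanish x hx j hj
      have hφker : LinearMap.range φ ≤ LinearMap.ker M.mulVecLin := by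
        rintro z hz
        obtain ⟨⟨x, hx⟩, rfl⟩ := hz
        rw [LinearMap.mem_ker, Matrix.mulVecLin_apply]
        show M.mulVec (fun j => x ↑j) = 0
        rw [hM, key I x (hvanish x hx)]
        have hxc : x ∈ LinearMap.ker H.mulVecLin := hC ▸ hDC hx
        rwa [LinearMap.mem_ker, Matrix.mulVecLin_apply] at hxc
      have h1 : r ≤ Module.finrank F (LinearMap.ker M.mulVecLin) := by
        calc r = Module.finrank F D := hDr.symm
          _ = Module.finrank F (LinearMap.range φ) :=
            (LinearMap.finrank_range_of_inj hφinj).symm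
          _ ≤ _ := Submodule.finrank_mono hφker
      rw [kerdim I] at h1
      exact h1
    · rw [GHW, ← hw]
      exact Set.ncard_eq_toFinset_card S hSfin
end
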